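/- arXiv:2502.03006 — 4 statements merged into one kernel-verified Lean document; each statement's English description precedes it below -/
import Mathlib

section
/- Let S : [t0, t1] → ℝ^{r×r} satisfy the PSI S-step ODE S'(t) = +U1ᵀ∇ℓ(U1 S(t) V0ᵀ)V0 on [t0, t1], where U1 ∈ ℝ^{m×r} and V0 ∈ ℝ^{n×r} have orthonormal columns. Define Y_S(t) := U1 S(t) V0ᵀ. Then for every t ∈ [t0, t1], the derivative of t ↦ ℓ(Y_S(t)) equals +‖U1ᵀ∇ℓ(Y_S(t))V0‖²; in particular ℓ is non-decreasing along the S-step of the projector-splitting integrator. -/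
open Matrix Set MeasureTheory Filter

attribute [local instance] Matrix.frobeniusNormedAddCommGroup Matrix.frobeniusNormedSpace

/-- The continuous linear functional `H ↦ ⟨G, H⟩ = tr(Gᵀ H)`, i.e. pairing with `G` in the
Frobenius inner product.  `hgrad : ∀ Y, HasFDerivAt ℓ (frobCLM (G Y)) Y` then states that
`G Y` is the gradient of `ℓ` at `Y` with respect to the Frobenius inner product. -/
noncomputable def frobCLM {m n : ℕ} (G : Matrix (Fin m) (Fin n) ℝ) :
    Matrix (Fin m) (Fin n) ℝ →L[ℝ] ℝ :=
  LinearMap.toContinuousLinearMap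
    { toFun := fun H => (Gᵀ * H).trace
      map_add' := by intro x y; simp [Matrix.mul_add]
      map_smul' := by intro c x; simp [Matrix.mul_smul] }

/-!
By the chain rule the loss changes at rate `⟨∇ℓ(Y_S), U₁ S' V₀ᵀ⟩`. Moving `U₁` and `V₀` to the
other side of the Frobenius pairing turns this into `⟨U₁ᵀ ∇ℓ(Y_S) V₀, S'⟩ = ‖S'‖²`, since the
S-step moves `S` exactly along the projected gradient. A nonnegative derivative makes the loss
monotone.
-/

namespace Matrix

variable {l m n p : Type*} [Fintype l] [Fintype m] [Fintype n] [Fintype p]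

theorem trace_transpose_mul_self_eq_frobenius_norm_sq (A : Matrix m n ℝ) :
    (Aᵀ * A).trace = ‖A‖ ^ 2 := by
  rw [frobenius_norm_def, ← Real.rpow_natCast, ← Real.rpow_mul (by positivity)]
  simp [trace, mul_apply, sq, Finset.sum_comm (γ := m)]

theorem trace_transpose_mul_mul_mul_transpose (G : Matrix l p ℝ) (U : Matrix l m ℝ)
    (A : Matrix m n ℝ) (V : Matrix p n ℝ) :
    (Gᵀ * (U * A * Vᵀ)).trace = ((Uᵀ * G * V)ᵀ * A).trace := by
  simp only [transpose_mul, transpose_transpose, Matrix.mul_assoc]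
  rw [← Matrix.mul_assoc Gᵀ, ← Matrix.mul_assoc (Gᵀ * U), trace_mul_comm]
  simp only [Matrix.mul_assoc]

theorem _root_.HasDerivAt.matrix_mul_mul {U : Matrix l m ℝ} {V : Matrix n p ℝ}
    {S : ℝ → Matrix m n ℝ} {S' : Matrix m n ℝ} {t : ℝ} (h : HasDerivAt S S' t) :
    HasDerivAt (fun s => U * S s * V) (U * S' * V) t :=
  ((mulRightLinearMap l ℝ V).comp (mulLeftLinearMap n ℝ U)).toContinuousLinearMap.hasFDerivAt
    |>.comp_hasDerivAt t h

end Matrix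

theorem frobCLM_self {m n : ℕ} (A : Matrix (Fin m) (Fin n) ℝ) : frobCLM A A = ‖A‖ ^ 2 :=
  trace_transpose_mul_self_eq_frobenius_norm_sq A

theorem frobCLM_mul_mul_transpose {m n r k : ℕ} (G : Matrix (Fin m) (Fin n) ℝ)
    (U : Matrix (Fin m) (Fin r) ℝ) (A : Matrix (Fin r) (Fin k) ℝ) (V : Matrix (Fin n) (Fin k) ℝ) :
    frobCLM G (U * A * Vᵀ) = frobCLM (Uᵀ * G * V) A :=
  trace_transpose_mul_mul_mul_transpose G U A V

theorem monotoneOn_of_hasDerivAt_nonneg {D : Set ℝ} (hD : Convex ℝ D) {f f' : ℝ → ℝ}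
    (hf : ∀ x ∈ D, HasDerivAt f (f' x) x) (hf' : ∀ x ∈ D, 0 ≤ f' x) : MonotoneOn f D :=
  monotoneOn_of_hasDerivWithinAt_nonneg hD (fun x hx => (hf x hx).continuousAt.continuousWithinAt)
    (fun x hx => (hf x (interior_subset hx)).hasDerivWithinAt) fun x hx => hf' x (interior_subset hx)

theorem sstep_loss_derivative_general {m n r : ℕ}
    (ℓ : Matrix (Fin m) (Fin n) ℝ → ℝ)
    (G : Matrix (Fin m) (Fin n) ℝ → Matrix (Fin m) (Fin n) ℝ)
    (hgrad : ∀ Y, HasFDerivAt ℓ (frobCLM (G Y)) Y)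
    (U1 : Matrix (Fin m) (Fin r) ℝ)
    (V0 : Matrix (Fin n) (Fin r) ℝ)
    (t0 t1 : ℝ) (S : ℝ → Matrix (Fin r) (Fin r) ℝ)
    (hS : ∀ t ∈ Set.Icc t0 t1, HasDerivAt S (U1ᵀ * G (U1 * S t * V0ᵀ) * V0) t) :
    (∀ t ∈ Set.Icc t0 t1,
        HasDerivAt (fun s => ℓ (U1 * S s * V0ᵀ)) (‖U1ᵀ * G (U1 * S t * V0ᵀ) * V0‖ ^ 2) t) ∧
    (∀ s ∈ Set.Icc t0 t1, ∀ t ∈ Set.Icc t0 t1, s ≤ t →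
        ℓ (U1 * S s * V0ᵀ) ≤ ℓ (U1 * S t * V0ᵀ)) := by
  have hderiv : ∀ t ∈ Set.Icc t0 t1,
      HasDerivAt (fun s => ℓ (U1 * S s * V0ᵀ)) (‖U1ᵀ * G (U1 * S t * V0ᵀ) * V0‖ ^ 2) t := by
    intro t ht
    have hchain := (hgrad (U1 * S t * V0ᵀ)).comp_hasDerivAt t
      ((hS t ht).matrix_mul_mul (U := U1) (V := V0ᵀ))
    exact hchain.congr_deriv ((frobCLM_mul_mul_transpose _ _ _ _).trans (frobCLM_self _))
  exact ⟨hderiv, fun s hs t ht hst =>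
    monotoneOn_of_hasDerivAt_nonneg (convex_Icc t0 t1) hderiv (fun _ _ => sq_nonneg _) hs ht hst⟩

/-- along the PSI S-step `S'(t) = +U1ᵀ∇ℓ(U1 S(t)V0ᵀ)V0`, the loss
`t ↦ ℓ(U1 S(t)V0ᵀ)` has derivative `+‖U1ᵀ∇ℓ(U1 S(t)V0ᵀ)V0‖²` at every `t ∈ [t0,t1]`;
in particular the loss is non-decreasing along the S-step. -/
theorem sstep_loss_derivative {m n r : ℕ}
    (ℓ : Matrix (Fin m) (Fin n) ℝ → ℝ)
    (G : Matrix (Fin m) (Fin n) ℝ → Matrix (Fin m) (Fin n) ℝ)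
    (hgrad : ∀ Y, HasFDerivAt ℓ (frobCLM (G Y)) Y)
    (U1 : Matrix (Fin m) (Fin r) ℝ) (hU1 : U1ᵀ * U1 = 1)
    (V0 : Matrix (Fin n) (Fin r) ℝ) (hV0 : V0ᵀ * V0 = 1)
    (t0 t1 : ℝ) (S : ℝ → Matrix (Fin r) (Fin r) ℝ)
    (hS : ∀ t ∈ Set.Icc t0 t1, HasDerivAt S (U1ᵀ * G (U1 * S t * V0ᵀ) * V0) t) :
    (∀ t ∈ Set.Icc t0 t1,
        HasDerivAt (fun s => ℓ (U1 * S s * V0ᵀ)) (‖U1ᵀ * G (U1 * S t * V0ᵀ) * V0‖ ^ 2) t) ∧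
    (∀ s ∈ Set.Icc t0 t1, ∀ t ∈ Set.Icc t0 t1, s ≤ t →
        ℓ (U1 * S s * V0ᵀ) ≤ ℓ (U1 * S t * V0ᵀ)) :=
  sstep_loss_derivative_general ℓ G hgrad U1 V0 t0 t1 S hS
end

section
/- (Loss evaluation of the PSI.) Let h > 0, t1 = t0 + h, let U0 ∈ ℝ^{m×r}, V0 ∈ ℝ^{n×r} have orthonormal columns and S0 ∈ ℝ^{r×r}, and set Y(t0) = U0 S0 V0ᵀ. Suppose: (i) K : [t0,t1] → ℝ^{m×r} satisfies K'(t) = −∇ℓ(K(t)V0ᵀ)V0 with K(t0) = U0 S0; (ii) U1 ∈ ℝ^{m×r} has orthonormal columns and S : [t0,t1] → ℝ^{r×r} satisfies S'(t) = +U1ᵀ∇ℓ(U1 S(t) V0ᵀ)V0 with U1 S(t0) = K(t1); (iii) L : [t0,t1] → ℝ^{n×r} satisfies L'(t) = −∇ℓ(U1 L(t)ᵀ)ᵀU1 with L(t0) = V0 S(t1)ᵀ; and set Y(t1) = U1 L(t1)ᵀ. Define αK := min_{s∈[t0,t1]} ‖∇ℓ(K(s)V0ᵀ)V0‖, αS :=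 max_{s∈[t0,t1]} ‖U1ᵀ∇ℓ(U1 S(s) V0ᵀ)V0‖, αL := min_{s∈[t0,t1]} ‖∇ℓ(U1 L(s)ᵀ)ᵀU1‖ (assume these extrema are attained). Then ℓ(Y(t1)) ≤ ℓ(Y(t0)) − αK² h + αS² h − αL² h. -/
open Matrix Set MeasureTheory Filter

attribute [local instance] Matrix.frobeniusNormedAddCommGroup Matrix.frobeniusNormedSpace

/-!
Each substep of the integrator is a gradient flow, forward or reversed, of `ℓ ∘ Φ` for a
linear map `Φ` (`K ↦ K V0ᵀ`, `S ↦ U1 S V0ᵀ`, `L ↦ U1 Lᵀ`). By the chain rule, along the flow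
`X' = c Φ*(∇ℓ(Φ X))` the loss `ℓ(Φ X)` has derivative `c ‖Φ*(∇ℓ(Φ X))‖²`, which is at most
`-αK²`, `αS²` and `-αL²` on the three substeps. The mean value inequality turns these rates
into bounds on the loss after each substep, and the bounds chain together because each substep
starts from the matrix at which the previous one ended.
-/

lemma frobCLM_apply {m n : ℕ} (Z H : Matrix (Fin m) (Fin n) ℝ) :
    frobCLM Z H = (Zᵀ * H).trace :=
  rfl

section FrobeniusAdjoint

variable {ι κ ι' κ' : Type*} [Fintype ι] [Fintype κ] [Fintype ι'] [Fintype κ']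

lemma trace_transpose_mul_self_eq_norm_sq (M : Matrix ι κ ℝ) : (Mᵀ * M).trace = ‖M‖ ^ 2 := by
  rw [frobenius_norm_def, ← Real.rpow_natCast, ← Real.rpow_mul (by positivity)]
  simp [trace, mul_apply, Finset.sum_comm (γ := ι), sq]

def IsFrobeniusAdjoint (Φ : Matrix ι κ ℝ → Matrix ι' κ' ℝ) (Ψ : Matrix ι' κ' ℝ → Matrix ι κ ℝ) :
    Prop :=
  ∀ Z X, (Zᵀ * Φ X).trace = ((Ψ Z)ᵀ * X).trace

lemma isFrobeniusAdjoint_mul_transpose (B : Matrix κ' κ ℝ) :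
    IsFrobeniusAdjoint (fun X : Matrix ι' κ ℝ => X * Bᵀ) (· * B) := fun Z X => by
  rw [← Matrix.mul_assoc, trace_mul_comm, ← Matrix.mul_assoc, ← transpose_mul]

lemma isFrobeniusAdjoint_mul_mul_transpose (A : Matrix ι' ι ℝ) (B : Matrix κ' κ ℝ) :
    IsFrobeniusAdjoint (fun X : Matrix ι κ ℝ => A * X * Bᵀ) (Aᵀ * · * B) := fun Z X => by
  rw [isFrobeniusAdjoint_mul_transpose B Z (A * X)]
  simp only [transpose_mul, transpose_transpose, Matrix.mul_assoc]

lemma isFrobeniusAdjoint_mul_transpose_right (A : Matrix ι' ι ℝ) :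
    IsFrobeniusAdjoint (fun X : Matrix κ' ι ℝ => A * Xᵀ) (fun Z => Zᵀ * A) := fun Z X => by
  rw [← Matrix.mul_assoc, ← trace_transpose, transpose_mul, transpose_transpose, trace_mul_comm]

end FrobeniusAdjoint

lemma le_add_mul_sub_of_hasDerivAt_le {f f' : ℝ → ℝ} {a b C : ℝ} (hab : a ≤ b)
    (hf : ∀ t ∈ Icc a b, HasDerivAt f (f' t) t) (hC : ∀ t ∈ Icc a b, f' t ≤ C) :
    f b ≤ f a + C * (b - a) := by
  have hf_int : ∀ t ∈ interior (Icc a b), HasDerivAt f (f' t) t :=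
    fun t ht => hf t (interior_subset ht)
  have hmvt := (convex_Icc a b).image_sub_le_mul_sub_of_deriv_le
    (fun t ht => (hf t ht).continuousAt.continuousWithinAt)
    (fun t ht => (hf_int t ht).differentiableAt.differentiableWithinAt)
    (fun t ht => (hf_int t ht).deriv ▸ hC t (interior_subset ht))
    a (left_mem_Icc.2 hab) b (right_mem_Icc.2 hab) hab
  linarith

section Extrema

variable {α E : Type*} [SeminormedAddCommGroup E] {f : α → E} {s : Set α} {c : ℝ} {t : α}

lemma IsLeast.sq_le_sq_norm (hc : IsLeast ((fun t => ‖f t‖) '' s) c) (ht : t ∈ s) :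
    c ^ 2 ≤ ‖f t‖ ^ 2 := by
  obtain ⟨t₀, -, rfl⟩ := hc.1
  exact pow_le_pow_left₀ (norm_nonneg _) (hc.2 ⟨t, ht, rfl⟩) 2

lemma IsGreatest.sq_norm_le_sq (hc : IsGreatest ((fun t => ‖f t‖) '' s) c) (ht : t ∈ s) :
    ‖f t‖ ^ 2 ≤ c ^ 2 :=
  pow_le_pow_left₀ (norm_nonneg _) (hc.2 ⟨t, ht, rfl⟩) 2

end Extrema

section GradientFlow

variable {m n : ℕ} {ℓ : Matrix (Fin m) (Fin n) ℝ → ℝ}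
  {G : Matrix (Fin m) (Fin n) ℝ → Matrix (Fin m) (Fin n) ℝ}
  {ι κ : Type*} [Fintype ι] [Fintype κ]
  {Φ : Matrix ι κ ℝ →ₗ[ℝ] Matrix (Fin m) (Fin n) ℝ} {Φadj : Matrix (Fin m) (Fin n) ℝ → Matrix ι κ ℝ}

theorem hasDerivAt_loss_comp_of_flow (hgrad : ∀ Y, HasFDerivAt ℓ (frobCLM (G Y)) Y)
    (hadj : IsFrobeniusAdjoint Φ Φadj) (c : ℝ) {X : ℝ → Matrix ι κ ℝ} {t : ℝ}
    (hX : HasDerivAt X (c • Φadj (G (Φ (X t)))) t) :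
    HasDerivAt (fun s => ℓ (Φ (X s))) (c * ‖Φadj (G (Φ (X t)))‖ ^ 2) t := by
  have hΦX := (LinearMap.toContinuousLinearMap Φ).hasFDerivAt.comp_hasDerivAt t hX
  refine ((hgrad _).comp_hasDerivAt t hΦX).congr_deriv ?_
  change frobCLM (G (Φ (X t))) (Φ (c • Φadj (G (Φ (X t))))) = _
  rw [frobCLM_apply, hadj, Matrix.mul_smul, trace_smul, trace_transpose_mul_self_eq_norm_sq,
    smul_eq_mul]

theorem loss_le_of_flow (hgrad : ∀ Y, HasFDerivAt ℓ (frobCLM (G Y)) Y)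
    (hadj : IsFrobeniusAdjoint Φ Φadj) (c : ℝ) {X : ℝ → Matrix ι κ ℝ} {a b C : ℝ} (hab : a ≤ b)
    (hX : ∀ t ∈ Icc a b, HasDerivAt X (c • Φadj (G (Φ (X t)))) t)
    (hC : ∀ t ∈ Icc a b, c * ‖Φadj (G (Φ (X t)))‖ ^ 2 ≤ C) :
    ℓ (Φ (X b)) ≤ ℓ (Φ (X a)) + C * (b - a) :=
  le_add_mul_sub_of_hasDerivAt_le hab
    (fun t ht => hasDerivAt_loss_comp_of_flow hgrad hadj c (hX t ht)) hC

end GradientFlow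

theorem psi_loss_evaluation_general {m n r : ℕ}
    (ℓ : Matrix (Fin m) (Fin n) ℝ → ℝ)
    (G : Matrix (Fin m) (Fin n) ℝ → Matrix (Fin m) (Fin n) ℝ)
    (hgrad : ∀ Y, HasFDerivAt ℓ (frobCLM (G Y)) Y)
    (t0 t1 h : ℝ) (hh : 0 < h) (ht1 : t1 = t0 + h)
    (U0 : Matrix (Fin m) (Fin r) ℝ)
    (V0 : Matrix (Fin n) (Fin r) ℝ)
    (S0 : Matrix (Fin r) (Fin r) ℝ)
    -- (i) K-step
    (K : ℝ → Matrix (Fin m) (Fin r) ℝ)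
    (hK : ∀ t ∈ Set.Icc t0 t1, HasDerivAt K (-(G (K t * V0ᵀ) * V0)) t)
    (hK0 : K t0 = U0 * S0)
    -- (ii) S-step (reversed sign)
    (U1 : Matrix (Fin m) (Fin r) ℝ)
    (S : ℝ → Matrix (Fin r) (Fin r) ℝ)
    (hS : ∀ t ∈ Set.Icc t0 t1, HasDerivAt S (U1ᵀ * G (U1 * S t * V0ᵀ) * V0) t)
    (hS0 : U1 * S t0 = K t1)
    -- (iii) L-step
    (L : ℝ → Matrix (Fin n) (Fin r) ℝ)
    (hL : ∀ t ∈ Set.Icc t0 t1, HasDerivAt L (-((G (U1 * (L t)ᵀ))ᵀ * U1)) t)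
    (hL0 : L t0 = V0 * (S t1)ᵀ)
    -- attained extrema
    (αK αS αL : ℝ)
    (hαK : IsLeast ((fun s => ‖G (K s * V0ᵀ) * V0‖) '' Set.Icc t0 t1) αK)
    (hαS : IsGreatest ((fun s => ‖U1ᵀ * G (U1 * S s * V0ᵀ) * V0‖) '' Set.Icc t0 t1) αS)
    (hαL : IsLeast ((fun s => ‖(G (U1 * (L s)ᵀ))ᵀ * U1‖) '' Set.Icc t0 t1) αL) :
    ℓ (U1 * (L t1)ᵀ) ≤ ℓ (U0 * S0 * V0ᵀ) - αK ^ 2 * h + αS ^ 2 * h - αL ^ 2 * h := by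
  have hab : t0 ≤ t1 := by linarith
  have hK_step : ℓ (K t1 * V0ᵀ) ≤ ℓ (K t0 * V0ᵀ) + -αK ^ 2 * (t1 - t0) :=
    loss_le_of_flow (Φ := mulRightLinearMap (Fin m) ℝ V0ᵀ) hgrad
      (isFrobeniusAdjoint_mul_transpose V0) (-1) hab
      (fun t ht => by simpa using hK t ht)
      (fun t ht => (neg_one_mul _).trans_le (neg_le_neg (hαK.sq_le_sq_norm ht)))
  have hS_step : ℓ (U1 * S t1 * V0ᵀ) ≤ ℓ (U1 * S t0 * V0ᵀ) + αS ^ 2 * (t1 - t0) :=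
    loss_le_of_flow (Φ := mulRightLinearMap (Fin m) ℝ V0ᵀ ∘ₗ mulLeftLinearMap (Fin r) ℝ U1)
      hgrad (isFrobeniusAdjoint_mul_mul_transpose U1 V0) 1 hab
      (fun t ht => by simpa using hS t ht)
      (fun t ht => (one_mul _).trans_le (hαS.sq_norm_le_sq ht))
  have hL_step : ℓ (U1 * (L t1)ᵀ) ≤ ℓ (U1 * (L t0)ᵀ) + -αL ^ 2 * (t1 - t0) :=
    loss_le_of_flow
      (Φ := mulLeftLinearMap (Fin n) ℝ U1 ∘ₗ (transposeLinearEquiv (Fin n) (Fin r) ℝ ℝ).toLinearMap)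
      hgrad (isFrobeniusAdjoint_mul_transpose_right U1) (-1) hab
      (fun t ht => by simpa using hL t ht)
      (fun t ht => (neg_one_mul _).trans_le (neg_le_neg (hαL.sq_le_sq_norm ht)))
  have hL_init : U1 * (L t0)ᵀ = U1 * S t1 * V0ᵀ := by
    rw [hL0, transpose_mul, transpose_transpose, Matrix.mul_assoc]
  rw [hK0] at hK_step
  rw [hS0] at hS_step
  rw [hL_init] at hL_step
  rw [show t1 - t0 = h by linarith] at hK_step hS_step hL_step
  linarith

/-- Loss evaluation of the PSI: with the K-, S- and L-substeps of the
projector-splitting integrator and the attained extrema `αK, αS, αL`, one has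
`ℓ(Y(t1)) ≤ ℓ(Y(t0)) − αK² h + αS² h − αL² h`. -/
theorem psi_loss_evaluation {m n r : ℕ}
    (ℓ : Matrix (Fin m) (Fin n) ℝ → ℝ)
    (G : Matrix (Fin m) (Fin n) ℝ → Matrix (Fin m) (Fin n) ℝ)
    (hgrad : ∀ Y, HasFDerivAt ℓ (frobCLM (G Y)) Y)
    (t0 t1 h : ℝ) (hh : 0 < h) (ht1 : t1 = t0 + h)
    (U0 : Matrix (Fin m) (Fin r) ℝ) (hU0 : U0ᵀ * U0 = 1)
    (V0 : Matrix (Fin n) (Fin r) ℝ) (hV0 : V0ᵀ * V0 = 1)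
    (S0 : Matrix (Fin r) (Fin r) ℝ)
    -- (i) K-step
    (K : ℝ → Matrix (Fin m) (Fin r) ℝ)
    (hK : ∀ t ∈ Set.Icc t0 t1, HasDerivAt K (-(G (K t * V0ᵀ) * V0)) t)
    (hK0 : K t0 = U0 * S0)
    -- (ii) S-step (reversed sign)
    (U1 : Matrix (Fin m) (Fin r) ℝ) (hU1 : U1ᵀ * U1 = 1)
    (S : ℝ → Matrix (Fin r) (Fin r) ℝ)
    (hS : ∀ t ∈ Set.Icc t0 t1, HasDerivAt S (U1ᵀ * G (U1 * S t * V0ᵀ) * V0) t)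
    (hS0 : U1 * S t0 = K t1)
    -- (iii) L-step
    (L : ℝ → Matrix (Fin n) (Fin r) ℝ)
    (hL : ∀ t ∈ Set.Icc t0 t1, HasDerivAt L (-((G (U1 * (L t)ᵀ))ᵀ * U1)) t)
    (hL0 : L t0 = V0 * (S t1)ᵀ)
    -- attained extrema
    (αK αS αL : ℝ)
    (hαK : IsLeast ((fun s => ‖G (K s * V0ᵀ) * V0‖) '' Set.Icc t0 t1) αK)
    (hαS : IsGreatest ((fun s => ‖U1ᵀ * G (U1 * S s * V0ᵀ) * V0‖) '' Set.Icc t0 t1) αS)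
    (hαL : IsLeast ((fun s => ‖(G (U1 * (L s)ᵀ))ᵀ * U1‖) '' Set.Icc t0 t1) αL) :
    ℓ (U1 * (L t1)ᵀ) ≤ ℓ (U0 * S0 * V0ᵀ) - αK ^ 2 * h + αS ^ 2 * h - αL ^ 2 * h :=
  psi_loss_evaluation_general ℓ G hgrad t0 t1 h hh ht1 U0 V0 S0 K hK hK0 U1 S hS hS0 L hL hL0 αK αS
    αL hαK hαS hαL
end

section
/- Let h > 0, t1 = t0 + h. Assume ∇ℓ is Lipschitz with constant c_l > 0 and bounded by B > 0 in Frobenius norm. Let U0, U1 ∈ ℝ^{m×r} and V0 ∈ ℝ^{n×r} have orthonormal columns, S0 ∈ ℝ^{r×r}, and set K0 = U0 S0. Let K : [t0,t1] → ℝ^{m×r} satisfy K'(t) = −∇ℓ(K(t)V0ᵀ)V0 with K(t0) = K0, and let S̃ : [t0,t1] → ℝ^{r×r} satisfy S̃'(t) = +U1ᵀ∇ℓ(U1 S̃(t)V0ᵀ)V0 with U1 S̃(t0) = K(t1). Then the PSI coefficient update S̃1 := S̃(t1) and the backward-corrected update S̄1 := U1ᵀ K0 satisfy ‖S̃1 −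 S̄1‖ ≤ 2 c_l B h². -/
/-!
Because `U1 S̃(t0) = K(t1)` and `U1ᵀ U1 = 1`, the deviation `S̃(t1) - U1ᵀ K(t0)` is the increment
over `[t0, t1]` of `E(t) = S̃(t) + U1ᵀ K(t)`, whose derivative is
`U1ᵀ (∇ℓ(U1 S̃ V0ᵀ) - ∇ℓ(K V0ᵀ)) V0`. Multiplying by matrices with orthonormal columns does not
increase the Frobenius norm, so both flows move at speed at most `B`; as `U1 S̃` starts where `K`
ends, `‖U1 S̃(t) - K(t)‖ ≤ B h` throughout. Hence `‖E'‖ ≤ c_l B h`, and the mean value inequality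
gives `‖S̃(t1) - S̄1‖ ≤ c_l B h²`.
-/

open Matrix Set MeasureTheory Filter

attribute [local instance] Matrix.frobeniusNormedAddCommGroup Matrix.frobeniusNormedSpace

namespace Matrix

variable {m n r : Type*} [Fintype m] [Fintype n] [Fintype r] [DecidableEq r]

theorem frobenius_norm_sq_eq_trace (A : Matrix m n ℝ) : ‖A‖ ^ 2 = (Aᵀ * A).trace := by
  rw [frobenius_norm_def, ← Real.rpow_natCast, ← Real.rpow_mul (by positivity), Nat.cast_ofNat,
    one_div_mul_cancel two_ne_zero, Real.rpow_one, trace, Finset.sum_comm]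
  simp [diag, mul_apply, sq]

theorem frobenius_norm_mul_of_orthonormal {U : Matrix m r ℝ} (hU : Uᵀ * U = 1)
    (X : Matrix r n ℝ) : ‖U * X‖ = ‖X‖ := by
  refine (pow_left_inj₀ (norm_nonneg _) (norm_nonneg _) two_ne_zero).1 ?_
  rw [frobenius_norm_sq_eq_trace, frobenius_norm_sq_eq_trace, transpose_mul, Matrix.mul_assoc,
    ← Matrix.mul_assoc Uᵀ, hU, Matrix.one_mul]

theorem frobenius_norm_mul_transpose_of_orthonormal {V : Matrix n r ℝ} (hV : Vᵀ * V = 1)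
    (X : Matrix m r ℝ) : ‖X * Vᵀ‖ = ‖X‖ := by
  rw [← frobenius_norm_transpose, transpose_mul, transpose_transpose,
    frobenius_norm_mul_of_orthonormal hV, frobenius_norm_transpose]

theorem frobenius_norm_mul_le_of_orthonormal {V : Matrix n r ℝ} (hV : Vᵀ * V = 1)
    (A : Matrix m n ℝ) : ‖A * V‖ ≤ ‖A‖ := by
  have hcross : (Aᵀ * (A * V * Vᵀ)).trace = ‖A * V‖ ^ 2 := by
    rw [frobenius_norm_sq_eq_trace, ← Matrix.mul_assoc, trace_mul_comm, transpose_mul,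
      Matrix.mul_assoc]
  have hcross' : ((A * V * Vᵀ)ᵀ * A).trace = ‖A * V‖ ^ 2 := by
    rw [← trace_transpose, transpose_mul, transpose_transpose, hcross]
  have hproj : ((A * V * Vᵀ)ᵀ * (A * V * Vᵀ)).trace = ‖A * V‖ ^ 2 := by
    rw [frobenius_norm_sq_eq_trace, transpose_mul, transpose_transpose, Matrix.mul_assoc,
      trace_mul_comm, Matrix.mul_assoc, Matrix.mul_assoc, hV, Matrix.mul_one]
  have hpyth : ‖A - A * V * Vᵀ‖ ^ 2 = ‖A‖ ^ 2 - ‖A * V‖ ^ 2 := by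
    rw [frobenius_norm_sq_eq_trace, frobenius_norm_sq_eq_trace A, transpose_sub,
      Matrix.sub_mul, Matrix.mul_sub, Matrix.mul_sub, trace_sub, trace_sub, trace_sub, hcross,
      hcross', hproj]
    ring
  nlinarith [norm_nonneg (A * V), norm_nonneg A, sq_nonneg ‖A - A * V * Vᵀ‖]

theorem frobenius_norm_transpose_mul_mul_le_of_orthonormal {s : Type*} [Fintype s]
    [DecidableEq s] {U : Matrix m s ℝ} (hU : Uᵀ * U = 1) {V : Matrix n r ℝ} (hV : Vᵀ * V = 1)
    (A : Matrix m n ℝ) : ‖Uᵀ * A * V‖ ≤ ‖A‖ :=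
  calc ‖Uᵀ * A * V‖ ≤ ‖Uᵀ * A‖ := frobenius_norm_mul_le_of_orthonormal hV _
    _ = ‖Aᵀ * U‖ := by rw [← frobenius_norm_transpose, transpose_mul, transpose_transpose]
    _ ≤ ‖Aᵀ‖ := frobenius_norm_mul_le_of_orthonormal hU _
    _ = ‖A‖ := frobenius_norm_transpose A

end Matrix

theorem norm_transpose_mul_sub_mul_le_of_lipschitz {m n r s : Type*} [Fintype m] [Fintype n]
    [Fintype r] [Fintype s] [DecidableEq r] [DecidableEq s] {G : Matrix m n ℝ → Matrix m n ℝ}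
    {cl : ℝ} (hlip : ∀ Z1 Z2, ‖G Z1 - G Z2‖ ≤ cl * ‖Z1 - Z2‖) {U : Matrix m s ℝ}
    (hU : Uᵀ * U = 1) {V : Matrix n r ℝ} (hV : Vᵀ * V = 1) (X Y : Matrix m r ℝ) :
    ‖Uᵀ * (G (X * Vᵀ) - G (Y * Vᵀ)) * V‖ ≤ cl * ‖X - Y‖ :=
  calc ‖Uᵀ * (G (X * Vᵀ) - G (Y * Vᵀ)) * V‖ ≤ ‖G (X * Vᵀ) - G (Y * Vᵀ)‖ :=
        frobenius_norm_transpose_mul_mul_le_of_orthonormal hU hV _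
    _ ≤ cl * ‖X * Vᵀ - Y * Vᵀ‖ := hlip _ _
    _ = cl * ‖X - Y‖ := by rw [← Matrix.sub_mul, frobenius_norm_mul_transpose_of_orthonormal hV]

theorem HasDerivAt.const_matrix_mul {l m n : Type*} [Fintype l] [Fintype m] [Fintype n]
    (M : Matrix l m ℝ) {f : ℝ → Matrix m n ℝ} {f' : Matrix m n ℝ} {t : ℝ}
    (hf : HasDerivAt f f' t) : HasDerivAt (fun s => M * f s) (M * f') t :=
  (mulLeftLinearMap n ℝ M).toContinuousLinearMap.hasFDerivAt.comp_hasDerivAt t hf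

theorem norm_sub_le_of_norm_deriv_le_on_Icc {E : Type*} [NormedAddCommGroup E]
    [NormedSpace ℝ E] {f f' : ℝ → E} {a b C : ℝ} (hf : ∀ t ∈ Icc a b, HasDerivAt f (f' t) t)
    (hC : ∀ t ∈ Icc a b, ‖f' t‖ ≤ C) {s t : ℝ} (hs : s ∈ Icc a b) (ht : t ∈ Icc a b)
    (hst : s ≤ t) : ‖f t - f s‖ ≤ C * (t - s) := by
  have := (convex_Icc a b).norm_image_sub_le_of_norm_hasDerivWithin_le
    (fun x hx => (hf x hx).hasDerivWithinAt) hC hs ht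
  rwa [Real.norm_of_nonneg (sub_nonneg.2 hst)] at this

theorem norm_mul_sub_le_of_mul_start_eq_end {m r s : Type*} [Fintype m] [Fintype r]
    [Fintype s] [DecidableEq s] {U : Matrix m s ℝ} (hU : Uᵀ * U = 1)
    {S S' : ℝ → Matrix s r ℝ} {K K' : ℝ → Matrix m r ℝ} {a b B : ℝ}
    (hS : ∀ t ∈ Icc a b, HasDerivAt S (S' t) t) (hS' : ∀ t ∈ Icc a b, ‖S' t‖ ≤ B)
    (hK : ∀ t ∈ Icc a b, HasDerivAt K (K' t) t) (hK' : ∀ t ∈ Icc a b, ‖K' t‖ ≤ B)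
    (hSK : U * S a = K b) {t : ℝ} (ht : t ∈ Icc a b) : ‖U * S t - K t‖ ≤ B * (b - a) :=
  have ha : a ∈ Icc a b := left_mem_Icc.2 (ht.1.trans ht.2)
  have hb : b ∈ Icc a b := right_mem_Icc.2 (ht.1.trans ht.2)
  calc ‖U * S t - K t‖ = ‖U * (S t - S a) + (K b - K t)‖ := by
        rw [Matrix.mul_sub, hSK, sub_add_sub_cancel]
    _ ≤ ‖S t - S a‖ + ‖K b - K t‖ := by
        grw [norm_add_le, frobenius_norm_mul_of_orthonormal hU]
    _ ≤ B * (t - a) + B * (b - t) :=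
        add_le_add (norm_sub_le_of_norm_deriv_le_on_Icc hS hS' ha ht ht.1)
          (norm_sub_le_of_norm_deriv_le_on_Icc hK hK' ht hb ht.2)
    _ = B * (b - a) := by ring

theorem psi_bcpsi_sstep_deviation_general {m n r : ℕ}
    (G : Matrix (Fin m) (Fin n) ℝ → Matrix (Fin m) (Fin n) ℝ)
    (cl B : ℝ) (hcl : 0 < cl)
    (hlip : ∀ Z1 Z2, ‖G Z1 - G Z2‖ ≤ cl * ‖Z1 - Z2‖)
    (hbound : ∀ Z, ‖G Z‖ ≤ B)
    (t0 t1 h : ℝ) (hh : 0 < h) (ht1 : t1 = t0 + h)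
    (U0 : Matrix (Fin m) (Fin r) ℝ)
    (U1 : Matrix (Fin m) (Fin r) ℝ) (hU1 : U1ᵀ * U1 = 1)
    (V0 : Matrix (Fin n) (Fin r) ℝ) (hV0 : V0ᵀ * V0 = 1)
    (S0 : Matrix (Fin r) (Fin r) ℝ)
    (K : ℝ → Matrix (Fin m) (Fin r) ℝ)
    (hK : ∀ t ∈ Set.Icc t0 t1, HasDerivAt K (-(G (K t * V0ᵀ) * V0)) t)
    (hK0 : K t0 = U0 * S0)
    (S : ℝ → Matrix (Fin r) (Fin r) ℝ)
    (hS : ∀ t ∈ Set.Icc t0 t1, HasDerivAt S (U1ᵀ * G (U1 * S t * V0ᵀ) * V0) t)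
    (hS0 : U1 * S t0 = K t1) :
    ‖S t1 - U1ᵀ * (U0 * S0)‖ ≤ 2 * cl * B * h ^ 2 := by
  have hI0 : t0 ∈ Icc t0 t1 := left_mem_Icc.2 (by linarith)
  have hI1 : t1 ∈ Icc t0 t1 := right_mem_Icc.2 (by linarith)
  have hgap (t : ℝ) (ht : t ∈ Icc t0 t1) : ‖U1 * S t - K t‖ ≤ B * h :=
    (norm_mul_sub_le_of_mul_start_eq_end hU1 hS
      (fun _ _ => (frobenius_norm_transpose_mul_mul_le_of_orthonormal hU1 hV0 _).trans (hbound _))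
      hK (fun _ _ => (norm_neg _).trans_le
        ((frobenius_norm_mul_le_of_orthonormal hV0 _).trans (hbound _))) hS0 ht).trans_eq
      (by rw [ht1, add_sub_cancel_left])
  have hE (t : ℝ) (ht : t ∈ Icc t0 t1) : HasDerivAt (fun t => S t + U1ᵀ * K t)
      (U1ᵀ * (G (U1 * S t * V0ᵀ) - G (K t * V0ᵀ)) * V0) t := by
    refine ((hS t ht).add ((hK t ht).const_matrix_mul U1ᵀ)).congr_deriv ?_
    rw [Matrix.mul_sub, Matrix.sub_mul, Matrix.mul_neg, Matrix.mul_assoc, Matrix.mul_assoc,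
      Matrix.mul_assoc, sub_eq_add_neg]
  have hB : 0 ≤ B := (norm_nonneg _).trans (hbound 0)
  calc ‖S t1 - U1ᵀ * (U0 * S0)‖ = ‖(S t1 + U1ᵀ * K t1) - (S t0 + U1ᵀ * K t0)‖ := by
        rw [← hK0, ← hS0, ← Matrix.mul_assoc, hU1, Matrix.one_mul, add_comm (S t0),
          add_sub_add_right_eq_sub]
    _ ≤ cl * (B * h) * (t1 - t0) :=
        norm_sub_le_of_norm_deriv_le_on_Icc hE (fun t ht =>
          (norm_transpose_mul_sub_mul_le_of_lipschitz hlip hU1 hV0 _ _).trans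
            (mul_le_mul_of_nonneg_left (hgap t ht) hcl.le)) hI0 hI1 hI0.2
    _ ≤ 2 * cl * B * h ^ 2 := by rw [ht1]; nlinarith [mul_nonneg hcl.le hB, sq_nonneg h]

/-- the PSI coefficient update `S̃1 = S̃(t1)` and the backward-corrected update
`S̄1 = U1ᵀ K0 = U1ᵀ U0 S0` differ by at most `2 c_l B h²`. -/
theorem psi_bcpsi_sstep_deviation {m n r : ℕ}
    (ℓ : Matrix (Fin m) (Fin n) ℝ → ℝ)
    (G : Matrix (Fin m) (Fin n) ℝ → Matrix (Fin m) (Fin n) ℝ)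
    (hgrad : ∀ Y, HasFDerivAt ℓ (frobCLM (G Y)) Y)
    (cl B : ℝ) (hcl : 0 < cl) (hB : 0 < B)
    (hlip : ∀ Z1 Z2, ‖G Z1 - G Z2‖ ≤ cl * ‖Z1 - Z2‖)
    (hbound : ∀ Z, ‖G Z‖ ≤ B)
    (t0 t1 h : ℝ) (hh : 0 < h) (ht1 : t1 = t0 + h)
    (U0 : Matrix (Fin m) (Fin r) ℝ) (hU0 : U0ᵀ * U0 = 1)
    (U1 : Matrix (Fin m) (Fin r) ℝ) (hU1 : U1ᵀ * U1 = 1)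
    (V0 : Matrix (Fin n) (Fin r) ℝ) (hV0 : V0ᵀ * V0 = 1)
    (S0 : Matrix (Fin r) (Fin r) ℝ)
    (K : ℝ → Matrix (Fin m) (Fin r) ℝ)
    (hK : ∀ t ∈ Set.Icc t0 t1, HasDerivAt K (-(G (K t * V0ᵀ) * V0)) t)
    (hK0 : K t0 = U0 * S0)
    (S : ℝ → Matrix (Fin r) (Fin r) ℝ)
    (hS : ∀ t ∈ Set.Icc t0 t1, HasDerivAt S (U1ᵀ * G (U1 * S t * V0ᵀ) * V0) t)
    (hS0 : U1 * S t0 = K t1) :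
    ‖S t1 - U1ᵀ * (U0 * S0)‖ ≤ 2 * cl * B * h ^ 2 :=
  psi_bcpsi_sstep_deviation_general G cl B hcl hlip hbound t0 t1 h hh ht1 U0 U1 hU1 V0 hV0 S0 K hK
    hK0 S hS hS0
end

section
/- Let h > 0, t1 = t0 + h. Assume ∇ℓ is Lipschitz with constant c_l > 0 and bounded by B > 0 in Frobenius norm. Let V0 ∈ ℝ^{n×r} have orthonormal columns, let K : [t0,t1] → ℝ^{m×r} satisfy K'(t) = −∇ℓ(K(t)V0ᵀ)V0, and set Y0 := K(t0)V0ᵀ. Then ‖∇ℓ(Y0) V0 V0ᵀ + (1/h)(K(t1)V0ᵀ − Y0)‖ ≤ c_l B h. -/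
/-! `Y(t) = K(t) V0ᵀ` solves `Y' = -∇ℓ(Y) V0 V0ᵀ`, and multiplying on the right by `V0` or `V0ᵀ`
does not increase the Frobenius norm, so `‖K'‖ ≤ B` and `‖Y(t) - Y(t0)‖ = ‖K(t) - K(t0)‖ ≤ B h`.
The quantity to bound is `slope Y t0 t1 - Y'(t0)`; by the mean value inequality applied to
`Y(t) - (t - t0) Y'(t0)` it is at most `sup ‖Y'(t) - Y'(t0)‖ ≤ c_l sup ‖Y(t) - Y(t0)‖ ≤ c_l B h`. -/

open Matrix Set MeasureTheory Filter

attribute [local instance] Matrix.frobeniusNormedAddCommGroup Matrix.frobeniusNormedSpace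

section Frobenius

variable {ι κ ρ : Type*} [Fintype ι] [Fintype κ] [Fintype ρ]

theorem Matrix.frobenius_norm_sq_eq_trace_s11 (A : Matrix ι κ ℝ) : ‖A‖ ^ 2 = (A * Aᵀ).trace := by
  rw [frobenius_norm_def, ← Real.rpow_natCast, ← Real.rpow_mul (by positivity)]
  norm_num [Matrix.trace, Matrix.mul_apply, sq]

variable [DecidableEq ρ] {V : Matrix κ ρ ℝ}

theorem Matrix.frobenius_norm_mul_transpose_of_orthonormal_s11 (hV : Vᵀ * V = 1)
    (M : Matrix ι ρ ℝ) : ‖M * Vᵀ‖ = ‖M‖ := by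
  refine (sq_eq_sq₀ (norm_nonneg _) (norm_nonneg _)).1 ?_
  rw [frobenius_norm_sq_eq_trace_s11, frobenius_norm_sq_eq_trace_s11, transpose_mul, transpose_transpose,
    Matrix.mul_assoc, ← Matrix.mul_assoc Vᵀ, hV, Matrix.one_mul]

theorem Matrix.frobenius_norm_mul_le_of_orthonormal_s11 (hV : Vᵀ * V = 1) (A : Matrix ι κ ℝ) :
    ‖A * V‖ ≤ ‖A‖ := by
  have hPyth : ‖A * V‖ ^ 2 + ‖A - A * V * Vᵀ‖ ^ 2 = ‖A‖ ^ 2 := by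
    simp only [frobenius_norm_sq_eq_trace_s11, transpose_mul, transpose_sub, transpose_transpose,
      Matrix.sub_mul, Matrix.mul_sub, ← trace_add]
    congr 1
    simp only [Matrix.mul_assoc, ← Matrix.mul_assoc Vᵀ V, hV, Matrix.one_mul]
    abel
  nlinarith [norm_nonneg (A * V), norm_nonneg A, sq_nonneg ‖A - A * V * Vᵀ‖]

end Frobenius

theorem HasDerivAt.matrix_mul_const {ι κ ρ : Type*} [Fintype ι] [Fintype κ] [Fintype ρ]
    {K : ℝ → Matrix ι κ ℝ} {K' : Matrix ι κ ℝ} {t : ℝ} (hK : HasDerivAt K K' t)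
    (W : Matrix κ ρ ℝ) : HasDerivAt (fun s => K s * W) (K' * W) t :=
  (mulRightLinearMap ι ℝ W).toContinuousLinearMap.hasFDerivAt.comp_hasDerivAt t hK

theorem norm_slope_sub_deriv_le {E : Type*} [NormedAddCommGroup E] [NormedSpace ℝ E]
    {f f' : ℝ → E} {a b L : ℝ} (hab : a < b)
    (hf : ∀ t ∈ Icc a b, HasDerivWithinAt f (f' t) (Icc a b) t)
    (hL : ∀ t ∈ Ico a b, ‖f' t - f' a‖ ≤ L) : ‖slope f a b - f' a‖ ≤ L := by
  have hg : ∀ t ∈ Icc a b, HasDerivWithinAt (fun s => f s - (s - a) • f' a)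
      (f' t - f' a) (Icc a b) t := fun t ht => by
    have := (hf t ht).sub (((hasDerivWithinAt_id t _).sub_const a).smul_const (f' a))
    rw [one_smul] at this
    exact this
  have key := norm_image_sub_le_of_norm_deriv_le_segment' hg hL b (right_mem_Icc.2 hab.le)
  have hba : 0 < b - a := sub_pos.2 hab
  have hslope : slope f a b - f' a = (b - a)⁻¹ • (f b - f a - (b - a) • f' a) := by
    rw [slope_def_module, smul_sub _ (f b - f a), inv_smul_smul₀ hba.ne']
  simp only [sub_self, zero_smul, sub_zero, sub_right_comm _ _ (f a)] at key
  rw [hslope, norm_smul, norm_inv, Real.norm_of_nonneg hba.le, inv_mul_le_iff₀ hba, mul_comm]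
  exact key

theorem kstep_consistency_bound_general {m n r : ℕ}
    (G : Matrix (Fin m) (Fin n) ℝ → Matrix (Fin m) (Fin n) ℝ)
    (cl B : ℝ) (hcl : 0 < cl) (hB : 0 < B)
    (hlip : ∀ Z1 Z2, ‖G Z1 - G Z2‖ ≤ cl * ‖Z1 - Z2‖)
    (hbound : ∀ Z, ‖G Z‖ ≤ B)
    (t0 t1 h : ℝ) (hh : 0 < h) (ht1 : t1 = t0 + h)
    (V0 : Matrix (Fin n) (Fin r) ℝ) (hV0 : V0ᵀ * V0 = 1)
    (K : ℝ → Matrix (Fin m) (Fin r) ℝ)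
    (hK : ∀ t ∈ Set.Icc t0 t1, HasDerivAt K (-(G (K t * V0ᵀ) * V0)) t) :
    ‖G (K t0 * V0ᵀ) * V0 * V0ᵀ + (1 / h) • (K t1 * V0ᵀ - K t0 * V0ᵀ)‖ ≤ cl * B * h := by
  have hKdrift : ∀ t ∈ Icc t0 t1, ‖K t - K t0‖ ≤ B * (t - t0) :=
    norm_image_sub_le_of_norm_deriv_le_segment' (fun t ht => (hK t ht).hasDerivWithinAt)
      fun t _ => by
        rw [norm_neg]
        exact (frobenius_norm_mul_le_of_orthonormal_s11 hV0 _).trans (hbound _)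
  have hY : ∀ t ∈ Icc t0 t1, HasDerivWithinAt (fun s => K s * V0ᵀ)
      (-(G (K t * V0ᵀ) * V0) * V0ᵀ) (Icc t0 t1) t := fun t ht =>
    ((hK t ht).matrix_mul_const V0ᵀ).hasDerivWithinAt
  have hYdev : ∀ t ∈ Ico t0 t1,
      ‖-(G (K t * V0ᵀ) * V0) * V0ᵀ - -(G (K t0 * V0ᵀ) * V0) * V0ᵀ‖ ≤ cl * B * h := by
    intro t ht
    calc _ = ‖(G (K t0 * V0ᵀ) - G (K t * V0ᵀ)) * V0‖ := by
          rw [← Matrix.sub_mul, frobenius_norm_mul_transpose_of_orthonormal_s11 hV0,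
            neg_sub_neg, Matrix.sub_mul]
      _ ≤ ‖G (K t0 * V0ᵀ) - G (K t * V0ᵀ)‖ := frobenius_norm_mul_le_of_orthonormal_s11 hV0 _
      _ ≤ cl * ‖K t - K t0‖ := by
          rw [norm_sub_rev (K t), ← frobenius_norm_mul_transpose_of_orthonormal_s11 hV0,
            Matrix.sub_mul]
          exact hlip _ _
      _ ≤ cl * (B * h) := by
          gcongr
          exact (hKdrift t (Ico_subset_Icc_self ht)).trans (by gcongr; linarith [ht.2])
      _ = cl * B * h := by ring
  have hslope_bound := norm_slope_sub_deriv_le (by linarith) hY hYdev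
  convert hslope_bound using 2
  rw [slope_def_module, ht1, add_sub_cancel_left, Matrix.neg_mul, sub_neg_eq_add, add_comm, one_div]

/-- along the K-step on `[t0, t0+h]` with `Y0 = K(t0)V0ᵀ`,
`‖∇ℓ(Y0)V0V0ᵀ + (1/h)(K(t1)V0ᵀ − Y0)‖ ≤ c_l B h`. -/
theorem kstep_consistency_bound {m n r : ℕ}
    (ℓ : Matrix (Fin m) (Fin n) ℝ → ℝ)
    (G : Matrix (Fin m) (Fin n) ℝ → Matrix (Fin m) (Fin n) ℝ)
    (hgrad : ∀ Y, HasFDerivAt ℓ (frobCLM (G Y)) Y)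
    (cl B : ℝ) (hcl : 0 < cl) (hB : 0 < B)
    (hlip : ∀ Z1 Z2, ‖G Z1 - G Z2‖ ≤ cl * ‖Z1 - Z2‖)
    (hbound : ∀ Z, ‖G Z‖ ≤ B)
    (t0 t1 h : ℝ) (hh : 0 < h) (ht1 : t1 = t0 + h)
    (V0 : Matrix (Fin n) (Fin r) ℝ) (hV0 : V0ᵀ * V0 = 1)
    (K : ℝ → Matrix (Fin m) (Fin r) ℝ)
    (hK : ∀ t ∈ Set.Icc t0 t1, HasDerivAt K (-(G (K t * V0ᵀ) * V0)) t) :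
    ‖G (K t0 * V0ᵀ) * V0 * V0ᵀ + (1 / h) • (K t1 * V0ᵀ - K t0 * V0ᵀ)‖ ≤ cl * B * h :=
  kstep_consistency_bound_general G cl B hcl hB hlip hbound t0 t1 h hh ht1 V0 hV0 K hK
end
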